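/- Let X be a Banach space, C ⊆ X a bounded closed convex set, F : C → 𝒞𝒦(C) a nonexpansive set-valued mapping, ξ ∈ C, 0 < ρ < r < R, and K a convex compact subset of C with h(K, F(ξ)) < ρ. Then there exists a mapping G : C → 𝒞𝒦(C) such that (1) G(ξ) = K; (2) G(x) = F(x) for all x ∈ C ∖ B(ξ, R); (3) Lip G ≤ max{ (R/(R−r)) Lip F, Lip F + ρ/r }; and (4) h(F(x), G(x)) ≤ 2r for all x ∈ C. -/

import Mathlib

open Metric Set

/-- `F` maps `C` into the hyperspace `𝒞𝒦(C)` of nonempty convex compact subsets of `C`. -/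
def MapsIntoCK {X : Type*} [NormedAddCommGroup X] [NormedSpace ℝ X]
    (C : Set X) (F : X → Set X) : Prop :=
  ∀ x ∈ C, (F x).Nonempty ∧ IsCompact (F x) ∧ Convex ℝ (F x) ∧ F x ⊆ C

/-!
Take `G x = λ x • K + (1 - λ x) • F (Φ x)`, where `λ x = max 0 (1 - ‖x - ξ‖ / r)` is a tent at `ξ`
and `Φ` is the radial retraction collapsing `B̄(ξ, r)` to `ξ` and fixing the complement of
`B(ξ, R)`. For `μ ≤ λ` and convex `K`, `A`,
`h(λ K + (1 - λ) A, μ K + (1 - μ) B) ≤ (λ - μ) h(K, A) + (1 - μ) h(A, B)`.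
Where the tent vanishes, `G = F ∘ Φ` is `(R / (R - r)) L`-Lipschitz; inside `B(ξ, r)` we have
`Φ = ξ`, so `h(K, F (Φ x)) < ρ` and the tent, of slope `1 / r`, costs at most `ρ / r`. Finally
`F x` is within `L r ≤ r` of `F (Φ x)`, which is within `λ ρ ≤ r` of `G x`.
-/

open Pointwise

section MinkowskiCombination

variable {E : Type*}

theorem hausdorffEDist_add_left_le [SeminormedAddCommGroup E] (S A B : Set E) :
    hausdorffEDist (S + A) (S + B) ≤ hausdorffEDist A B := by
  have key : ∀ A B : Set E, ∀ x ∈ S + A, infEDist x (S + B) ≤ hausdorffEDist A B := by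
    rintro A B _ ⟨s, hs, a, ha, rfl⟩
    calc infEDist (s + a) (S + B) ≤ infEDist (s +ᵥ a) (s +ᵥ B) :=
          infEDist_anti (vadd_set_subset_add hs)
      _ = infEDist a B := infEDist_vadd s a B
      _ ≤ hausdorffEDist A B := infEDist_le_hausdorffEDist_of_mem ha
  refine hausdorffEDist_le_of_infEDist (key A B) fun x hx => ?_
  rw [hausdorffEDist_comm]
  exact key B A x hx

theorem hausdorffEDist_smul_le {𝕜 : Type*} [NormedField 𝕜] [SeminormedAddCommGroup E]
    [NormedSpace 𝕜 E] (c : 𝕜) {A B : Set E} (hA : A.Nonempty) (hB : B.Nonempty) :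
    hausdorffEDist (c • A) (c • B) ≤ ‖c‖₊ * hausdorffEDist A B := by
  rcases eq_or_ne c 0 with rfl | hc
  · simp [zero_smul_set hA, zero_smul_set hB]
  have key : ∀ A B : Set E, ∀ x ∈ c • A, infEDist x (c • B) ≤ ‖c‖₊ * hausdorffEDist A B := by
    rintro A B _ ⟨a, ha, rfl⟩
    rw [infEDist_smul₀ hc, ENNReal.smul_def, smul_eq_mul]
    gcongr
    exact infEDist_le_hausdorffEDist_of_mem ha
  refine hausdorffEDist_le_of_infEDist (key A B) fun x hx => ?_
  rw [hausdorffEDist_comm]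
  exact key B A x hx

variable [NormedAddCommGroup E] [NormedSpace ℝ E]

/-- Pass through `b • K + (1 - b) • A`; convexity of `K` and `A` lets the weights split. -/
theorem hausdorffEDist_convexComb_le {K A B : Set E} (hK : Convex ℝ K) (hA : Convex ℝ A)
    (hKne : K.Nonempty) (hAne : A.Nonempty) (hBne : B.Nonempty) {a b : ℝ} (hb : 0 ≤ b)
    (hba : b ≤ a) (ha : a ≤ 1) :
    hausdorffEDist (a • K + (1 - a) • A) (b • K + (1 - b) • B) ≤
      ‖a - b‖₊ * hausdorffEDist K A + ‖1 - b‖₊ * hausdorffEDist A B := by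
  have hP : a • K + (1 - a) • A = b • K + ((1 - a) • A + (a - b) • K) := by
    rw [add_comm _ ((a - b) • K), ← add_assoc, ← hK.add_smul hb (sub_nonneg.2 hba),
      add_sub_cancel]
  have hM : b • K + (1 - b) • A = b • K + ((1 - a) • A + (a - b) • A) := by
    rw [← hA.add_smul (sub_nonneg.2 ha) (sub_nonneg.2 hba), sub_add_sub_cancel]
  calc _ ≤ hausdorffEDist (a • K + (1 - a) • A) (b • K + (1 - b) • A) +
        hausdorffEDist (b • K + (1 - b) • A) (b • K + (1 - b) • B) := hausdorffEDist_triangle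
    _ ≤ _ := by
      gcongr
      · rw [hP, hM]
        exact (hausdorffEDist_add_left_le _ _ _).trans <|
          (hausdorffEDist_add_left_le _ _ _).trans (hausdorffEDist_smul_le _ hKne hAne)
      · exact (hausdorffEDist_add_left_le _ _ _).trans (hausdorffEDist_smul_le _ hAne hBne)

theorem hausdorffDist_convexComb_le {K A B : Set E} (hK : Convex ℝ K) (hA : Convex ℝ A)
    (hKne : K.Nonempty) (hAne : A.Nonempty) (hBne : B.Nonempty) (hKb : Bornology.IsBounded K)
    (hAb : Bornology.IsBounded A) (hBb : Bornology.IsBounded B) {a b : ℝ} (hb : 0 ≤ b)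
    (hba : b ≤ a) (ha : a ≤ 1) :
    hausdorffDist (a • K + (1 - a) • A) (b • K + (1 - b) • B) ≤
      (a - b) * hausdorffDist K A + (1 - b) * hausdorffDist A B := by
  have hKA := hausdorffEDist_ne_top_of_nonempty_of_bounded hKne hAne hKb hAb
  have hAB := hausdorffEDist_ne_top_of_nonempty_of_bounded hAne hBne hAb hBb
  have h := ENNReal.toReal_mono (by finiteness)
    (hausdorffEDist_convexComb_le hK hA hKne hAne hBne hb hba ha)
  rwa [ENNReal.toReal_add (by finiteness) (by finiteness), ENNReal.toReal_mul,
    ENNReal.toReal_mul, ENNReal.coe_toReal, ENNReal.coe_toReal, coe_nnnorm, coe_nnnorm,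
    Real.norm_of_nonneg (sub_nonneg.2 hba), Real.norm_of_nonneg (by linarith)] at h

end MinkowskiCombination

section RadialRetraction

variable {E : Type*} [NormedAddCommGroup E] [NormedSpace ℝ E]

theorem norm_smul_sub_smul_le_of_radial {g : ℝ → ℝ} {c : ℝ} (hg : MonotoneOn g (Ici 0))
    (hg0 : ∀ t, 0 ≤ t → 0 ≤ g t) (hgc : ∀ t, 0 ≤ t → g t ≤ c)
    (hprofile : ∀ t s, 0 ≤ t → t ≤ s → g s * s - g t * t ≤ c * (s - t)) (u v : E) :
    ‖g ‖u‖ • u - g ‖v‖ • v‖ ≤ c * ‖u - v‖ := by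
  wlog huv : ‖v‖ ≤ ‖u‖ generalizing u v
  · rw [norm_sub_rev, norm_sub_rev u]
    exact this v u (le_of_not_ge huv)
  have hmono : g ‖v‖ ≤ g ‖u‖ := hg (norm_nonneg v) (norm_nonneg u) huv
  have hgu := hg0 _ (norm_nonneg u)
  calc ‖g ‖u‖ • u - g ‖v‖ • v‖ = ‖g ‖u‖ • (u - v) + (g ‖u‖ - g ‖v‖) • v‖ := by
        rw [smul_sub, sub_smul, sub_add_sub_cancel]
    _ ≤ g ‖u‖ * ‖u - v‖ + (g ‖u‖ - g ‖v‖) * ‖v‖ := by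
        refine (norm_add_le _ _).trans_eq ?_
        rw [norm_smul_of_nonneg hgu, norm_smul_of_nonneg (sub_nonneg.2 hmono)]
    _ ≤ c * ‖u - v‖ := by
        have := hprofile _ _ (norm_nonneg v) huv
        nlinarith [hgc _ (norm_nonneg u), norm_sub_norm_le u v]

/-- The scaling factor of the radial retraction: `t ↦ radialScale r R t * t` is `0` on `[0, r]`,
linear with slope `R / (R - r)` on `[r, R]` and the identity on `[R, ∞)`. -/
noncomputable def radialScale (r R t : ℝ) : ℝ :=
  min t (R / (R - r) * max 0 (t - r)) / t

variable {r R t : ℝ}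

theorem one_le_div_sub (hr : 0 ≤ r) (hrR : r < R) : 1 ≤ R / (R - r) := by
  rw [one_le_div (by linarith)]
  linarith

theorem radialScale_mul_self (hr : 0 ≤ r) (t : ℝ) :
    radialScale r R t * t = min t (R / (R - r) * max 0 (t - r)) := by
  rcases eq_or_ne t 0 with rfl | ht
  · simp [hr]
  · exact div_mul_cancel₀ _ ht

theorem radialScale_nonneg (hr : 0 ≤ r) (hrR : r < R) (ht : 0 ≤ t) : 0 ≤ radialScale r R t := by
  have := one_le_div_sub hr hrR
  unfold radialScale
  positivity

theorem radialScale_le_one (ht : 0 ≤ t) : radialScale r R t ≤ 1 :=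
  div_le_one_of_le₀ (min_le_left _ _) ht

theorem radialScale_of_le (ht : 0 ≤ t) (htr : t ≤ r) : radialScale r R t = 0 := by
  simp [radialScale, max_eq_left (sub_nonpos.2 htr), ht]

theorem radialScale_of_ge (hr : 0 ≤ r) (hrR : r < R) (ht : R ≤ t) : radialScale r R t = 1 := by
  have hRr : 0 < R - r := by linarith
  have hlin : t ≤ R / (R - r) * max 0 (t - r) := by
    rw [max_eq_right (by linarith), div_mul_eq_mul_div, le_div_iff₀ hRr]
    nlinarith
  rw [radialScale, min_eq_left hlin, div_self (by linarith)]

theorem radialScale_monotoneOn (hr : 0 ≤ r) (hrR : r < R) :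
    MonotoneOn (radialScale r R) (Ici 0) := by
  intro t ht s hs hts
  rcases (mem_Ici.1 ht).eq_or_lt with rfl | ht0
  · rw [radialScale_of_le le_rfl hr]
    exact radialScale_nonneg hr hrR hs
  have hs0 : 0 < s := ht0.trans_le hts
  unfold radialScale
  rw [← min_div_div_right ht0.le, ← min_div_div_right hs0.le, div_self ht0.ne', div_self hs0.ne',
    mul_div_assoc, mul_div_assoc]
  refine min_le_min le_rfl (mul_le_mul_of_nonneg_left ?_ (by linarith [one_le_div_sub hr hrR]))
  rw [div_le_div_iff₀ ht0 hs0]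
  rcases le_total t r with htr | hrt
  · rw [max_eq_left (sub_nonpos.2 htr), zero_mul]
    positivity
  · rw [max_eq_right (sub_nonneg.2 hrt), max_eq_right (by linarith)]
    nlinarith

theorem radialScale_mul_self_sub_le (hr : 0 ≤ r) (hrR : r < R) {s : ℝ} (hts : t ≤ s) :
    radialScale r R s * s - radialScale r R t * t ≤ R / (R - r) * (s - t) := by
  have hc := one_le_div_sub hr hrR
  rw [radialScale_mul_self hr, radialScale_mul_self hr, sub_le_iff_le_add', ← min_add_add_right]
  refine min_le_min (by nlinarith) ?_
  rw [← mul_add]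
  gcongr
  exact max_le (by positivity) (by linarith [le_max_right 0 (t - r)])

theorem sub_radialScale_mul_self_le (hr : 0 ≤ r) (hrR : r < R) (t : ℝ) :
    t - radialScale r R t * t ≤ r := by
  have hc := one_le_div_sub hr hrR
  rw [radialScale_mul_self hr, sub_le_comm]
  refine le_min (by linarith) ?_
  nlinarith [le_max_right 0 (t - r), le_max_left 0 (t - r)]

/-- The retraction `Φ` of the context. -/
noncomputable def radialRetraction (ξ : E) (r R : ℝ) (x : E) : E :=
  ξ + radialScale r R ‖x - ξ‖ • (x - ξ)

variable {ξ x : E}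

theorem radialRetraction_mem {C : Set E} (hC : Convex ℝ C) (hξ : ξ ∈ C) (hx : x ∈ C)
    (hr : 0 ≤ r) (hrR : r < R) : radialRetraction ξ r R x ∈ C :=
  hC.add_smul_sub_mem hξ hx
    ⟨radialScale_nonneg hr hrR (norm_nonneg _), radialScale_le_one (norm_nonneg _)⟩

theorem radialRetraction_of_norm_le (hx : ‖x - ξ‖ ≤ r) : radialRetraction ξ r R x = ξ := by
  rw [radialRetraction, radialScale_of_le (norm_nonneg _) hx, zero_smul, add_zero]

theorem radialRetraction_of_le_norm (hr : 0 ≤ r) (hrR : r < R) (hx : R ≤ ‖x - ξ‖) :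
    radialRetraction ξ r R x = x := by
  rw [radialRetraction, radialScale_of_ge hr hrR hx, one_smul, add_sub_cancel]

theorem norm_radialRetraction_sub_center (hr : 0 ≤ r) (hrR : r < R) :
    ‖radialRetraction ξ r R x - ξ‖ = radialScale r R ‖x - ξ‖ * ‖x - ξ‖ := by
  rw [radialRetraction, add_sub_cancel_left,
    norm_smul_of_nonneg (radialScale_nonneg hr hrR (norm_nonneg _))]

theorem norm_radialRetraction_sub_center_le (hr : 0 ≤ r) (hrR : r < R) :
    ‖radialRetraction ξ r R x - ξ‖ ≤ R / (R - r) * max 0 (‖x - ξ‖ - r) := by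
  rw [norm_radialRetraction_sub_center hr hrR, radialScale_mul_self hr]
  exact min_le_right _ _

theorem norm_sub_radialRetraction_le (hr : 0 ≤ r) (hrR : r < R) :
    ‖x - radialRetraction ξ r R x‖ ≤ r := by
  have hx : x - radialRetraction ξ r R x = (1 - radialScale r R ‖x - ξ‖) • (x - ξ) := by
    rw [radialRetraction, sub_smul, one_smul]
    abel
  rw [hx, norm_smul_of_nonneg (sub_nonneg.2 (radialScale_le_one (norm_nonneg _))), sub_mul,
    one_mul]
  exact sub_radialScale_mul_self_le hr hrR _

theorem norm_radialRetraction_sub_le (hr : 0 ≤ r) (hrR : r < R) (x y : E) :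
    ‖radialRetraction ξ r R x - radialRetraction ξ r R y‖ ≤ R / (R - r) * ‖x - y‖ := by
  have h := norm_smul_sub_smul_le_of_radial (radialScale_monotoneOn hr hrR)
    (fun t ht => radialScale_nonneg hr hrR ht)
    (fun t ht => (radialScale_le_one ht).trans (one_le_div_sub hr hrR))
    (fun t s _ hts => radialScale_mul_self_sub_le hr hrR hts) (x - ξ) (y - ξ)
  rwa [sub_sub_sub_cancel_right, ← add_sub_add_left_eq_sub _ _ ξ] at h

end RadialRetraction

section Tent

variable {X : Type*} [SeminormedAddCommGroup X]

noncomputable def tent (ξ : X) (r : ℝ) (x : X) : ℝ :=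
  max 0 (1 - ‖x - ξ‖ / r)

variable {ξ x y : X} {r : ℝ}

theorem tent_nonneg : 0 ≤ tent ξ r x :=
  le_max_left _ _

theorem tent_le_one (hr : 0 ≤ r) : tent ξ r x ≤ 1 :=
  max_le zero_le_one (by linarith [div_nonneg (norm_nonneg (x - ξ)) hr])

theorem tent_self : tent ξ r ξ = 1 := by
  simp [tent]

theorem tent_of_le_norm (hr : 0 < r) (hx : r ≤ ‖x - ξ‖) : tent ξ r x = 0 :=
  max_eq_left (by rwa [sub_nonpos, one_le_div hr])

theorem tent_anti (hr : 0 ≤ r) (hxy : ‖x - ξ‖ ≤ ‖y - ξ‖) : tent ξ r y ≤ tent ξ r x := by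
  unfold tent
  gcongr

theorem tent_sub_tent_mul_add_eq (hr : 0 < r) (hx : ‖x - ξ‖ ≤ r) :
    (tent ξ r x - tent ξ r y) * r + max 0 (‖y - ξ‖ - r) = ‖y - ξ‖ - ‖x - ξ‖ := by
  have hx' : tent ξ r x = 1 - ‖x - ξ‖ / r := max_eq_right (by rwa [sub_nonneg, div_le_one hr])
  rcases le_total ‖y - ξ‖ r with hy | hy
  · rw [hx', tent, max_eq_right (by rwa [sub_nonneg, div_le_one hr]),
      max_eq_left (sub_nonpos.2 hy)]
    field_simp
    ring
  · rw [hx', tent_of_le_norm hr hy, max_eq_right (sub_nonneg.2 hy)]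
    field_simp
    ring

end Tent

section Perturbation

variable {X : Type*} [NormedAddCommGroup X] [NormedSpace ℝ X]

/-- The map `G` of the context. -/
noncomputable def perturbation (F : X → Set X) (K : Set X) (ξ : X) (r R : ℝ) (x : X) : Set X :=
  tent ξ r x • K + (1 - tent ξ r x) • F (radialRetraction ξ r R x)

variable {C K : Set X} {F : X → Set X} {ξ x y : X} {ρ r R L : ℝ}

theorem mapsIntoCK_perturbation (hC : Convex ℝ C) (hF : MapsIntoCK C F) (hξ : ξ ∈ C)
    (hKne : K.Nonempty) (hKc : IsCompact K) (hKco : Convex ℝ K) (hKC : K ⊆ C)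
    (hr : 0 ≤ r) (hrR : r < R) : MapsIntoCK C (perturbation F K ξ r R) := by
  intro x hx
  obtain ⟨hAne, hAc, hAco, hAC⟩ := hF _ (radialRetraction_mem hC hξ hx hr hrR)
  refine ⟨hKne.smul_set.add hAne.smul_set, (hKc.smul _).add (hAc.smul _),
    (hKco.smul _).add (hAco.smul _), ?_⟩
  exact (add_subset_add (smul_set_mono hKC) (smul_set_mono hAC)).trans
    (hC.set_combo_subset tent_nonneg (sub_nonneg.2 (tent_le_one hr)) (add_sub_cancel _ _))

theorem perturbation_self (hFξ : (F ξ).Nonempty) (hr : 0 ≤ r) : perturbation F K ξ r R ξ = K := by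
  rw [perturbation, tent_self, radialRetraction_of_norm_le (by simpa using hr), one_smul,
    sub_self, zero_smul_set hFξ, add_zero]

theorem perturbation_of_le_norm (hKne : K.Nonempty) (hr : 0 < r) (hrR : r < R)
    (hx : R ≤ ‖x - ξ‖) : perturbation F K ξ r R x = F x := by
  rw [perturbation, tent_of_le_norm hr (hrR.le.trans hx), radialRetraction_of_le_norm hr.le hrR hx,
    zero_smul_set hKne, sub_zero, one_smul, zero_add]

theorem hausdorffDist_perturbation_le_add (hC : Convex ℝ C) (hF : MapsIntoCK C F) (hξ : ξ ∈ C)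
    (hKne : K.Nonempty) (hKc : IsCompact K) (hKco : Convex ℝ K) (hr : 0 ≤ r) (hrR : r < R)
    (hx : x ∈ C) (hy : y ∈ C) (hxy : ‖x - ξ‖ ≤ ‖y - ξ‖) :
    hausdorffDist (perturbation F K ξ r R x) (perturbation F K ξ r R y) ≤
      (tent ξ r x - tent ξ r y) * hausdorffDist K (F (radialRetraction ξ r R x)) +
        (1 - tent ξ r y) *
          hausdorffDist (F (radialRetraction ξ r R x)) (F (radialRetraction ξ r R y)) := by
  obtain ⟨hAne, hAc, hAco, -⟩ := hF _ (radialRetraction_mem hC hξ hx hr hrR)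
  obtain ⟨hBne, hBc, -, -⟩ := hF _ (radialRetraction_mem hC hξ hy hr hrR)
  exact hausdorffDist_convexComb_le hKco hAco hKne hAne hBne hKc.isBounded hAc.isBounded
    hBc.isBounded tent_nonneg (tent_anti hr hxy) (tent_le_one hr)

theorem hausdorffDist_perturbation_le_of_norm_le (hC : Convex ℝ C) (hF : MapsIntoCK C F)
    (hξ : ξ ∈ C) (hKne : K.Nonempty) (hKc : IsCompact K) (hKco : Convex ℝ K)
    (hKF : hausdorffDist K (F ξ) ≤ ρ) (hL : 0 ≤ L)
    (hFL : ∀ x ∈ C, ∀ y ∈ C, hausdorffDist (F x) (F y) ≤ L * ‖x - y‖) (hr : 0 < r) (hrR : r < R)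
    (hx : x ∈ C) (hy : y ∈ C) (hxy : ‖x - ξ‖ ≤ ‖y - ξ‖) :
    hausdorffDist (perturbation F K ξ r R x) (perturbation F K ξ r R y) ≤
      max (R / (R - r) * L) (L + ρ / r) * ‖x - y‖ := by
  set M := max (R / (R - r) * L) (L + ρ / r)
  have hc : 0 ≤ R / (R - r) := div_nonneg (by linarith) (by linarith)
  have hML : R / (R - r) * L ≤ M := le_max_left _ _
  have hM : 0 ≤ M := (mul_nonneg hc hL).trans hML
  have hFΦ := hFL _ (radialRetraction_mem hC hξ hx hr.le hrR) _
    (radialRetraction_mem hC hξ hy hr.le hrR)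
  have hbase := hausdorffDist_perturbation_le_add hC hF hξ hKne hKc hKco hr.le hrR hx hy hxy
  rcases le_or_gt r ‖x - ξ‖ with hfar | hnear
  · rw [tent_of_le_norm hr hfar, tent_of_le_norm hr (hfar.trans hxy), sub_self, zero_mul,
      zero_add, sub_zero, one_mul] at hbase
    calc _ ≤ L * (R / (R - r) * ‖x - y‖) :=
          hbase.trans (hFΦ.trans (by gcongr; exact norm_radialRetraction_sub_le hr.le hrR x y))
      _ ≤ M * ‖x - y‖ := by rw [← mul_assoc, mul_comm L]; gcongr
  · have hΦx : radialRetraction ξ r R x = ξ := radialRetraction_of_norm_le hnear.le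
    rw [hΦx, norm_sub_rev] at hFΦ
    rw [hΦx] at hbase
    have htent : 0 ≤ tent ξ r x - tent ξ r y := sub_nonneg.2 (tent_anti hr.le hxy)
    have hρM : ρ ≤ M * r := by
      rw [← div_le_iff₀ hr]
      exact (le_add_of_nonneg_left hL).trans (le_max_right _ _)
    have hFξ : hausdorffDist (F ξ) (F (radialRetraction ξ r R y)) ≤
        L * (R / (R - r) * max 0 (‖y - ξ‖ - r)) :=
      hFΦ.trans (by gcongr; exact norm_radialRetraction_sub_center_le hr.le hrR)
    calc _ ≤ (tent ξ r x - tent ξ r y) * ρ + L * (R / (R - r) * max 0 (‖y - ξ‖ - r)) :=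
          hbase.trans (add_le_add (mul_le_mul_of_nonneg_left hKF htent)
            ((mul_le_of_le_one_left hausdorffDist_nonneg (sub_le_self _ tent_nonneg)).trans hFξ))
      _ ≤ M * ((tent ξ r x - tent ξ r y) * r) + M * max 0 (‖y - ξ‖ - r) := by
          refine add_le_add ?_ ?_
          · rw [mul_left_comm]
            exact mul_le_mul_of_nonneg_left hρM htent
          · rw [← mul_assoc]
            exact mul_le_mul_of_nonneg_right (by rwa [mul_comm]) (le_max_left _ _)
      _ = M * (‖y - ξ‖ - ‖x - ξ‖) := by rw [← mul_add, tent_sub_tent_mul_add_eq hr hnear.le]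
      _ ≤ M * ‖x - y‖ := by
          gcongr
          simpa [norm_sub_rev y x] using norm_sub_norm_le (y - ξ) (x - ξ)

theorem hausdorffDist_perturbation_le (hC : Convex ℝ C) (hF : MapsIntoCK C F) (hξ : ξ ∈ C)
    (hKne : K.Nonempty) (hKc : IsCompact K) (hKco : Convex ℝ K)
    (hKF : hausdorffDist K (F ξ) ≤ ρ) (hL : 0 ≤ L)
    (hFL : ∀ x ∈ C, ∀ y ∈ C, hausdorffDist (F x) (F y) ≤ L * ‖x - y‖) (hr : 0 < r) (hrR : r < R)
    (hx : x ∈ C) (hy : y ∈ C) :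
    hausdorffDist (perturbation F K ξ r R x) (perturbation F K ξ r R y) ≤
      max (R / (R - r) * L) (L + ρ / r) * ‖x - y‖ := by
  rcases le_total ‖x - ξ‖ ‖y - ξ‖ with hxy | hyx
  · exact hausdorffDist_perturbation_le_of_norm_le hC hF hξ hKne hKc hKco hKF hL hFL hr hrR hx hy
      hxy
  · rw [hausdorffDist_comm, norm_sub_rev]
    exact hausdorffDist_perturbation_le_of_norm_le hC hF hξ hKne hKc hKco hKF hL hFL hr hrR hy hx
      hyx

theorem hausdorffDist_perturbation_le_two_mul (hC : Convex ℝ C) (hF : MapsIntoCK C F)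
    (hξ : ξ ∈ C) (hKne : K.Nonempty) (hKc : IsCompact K) (hKco : Convex ℝ K)
    (hKF : hausdorffDist K (F ξ) ≤ ρ) (hρr : ρ ≤ r) (hL : L ≤ 1)
    (hFL : ∀ x ∈ C, ∀ y ∈ C, hausdorffDist (F x) (F y) ≤ L * ‖x - y‖) (hr : 0 < r) (hrR : r < R)
    (hx : x ∈ C) : hausdorffDist (F x) (perturbation F K ξ r R x) ≤ 2 * r := by
  have hΦx := radialRetraction_mem hC hξ hx hr.le hrR
  obtain ⟨hAne, hAc, hAco, -⟩ := hF _ hΦx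
  obtain ⟨hFxne, hFxc, -, -⟩ := hF x hx
  have hFA : hausdorffDist (F x) (F (radialRetraction ξ r R x)) ≤ r := by
    have := norm_sub_radialRetraction_le (x := x) (ξ := ξ) hr.le hrR
    nlinarith [hFL x hx _ hΦx, norm_nonneg (x - radialRetraction ξ r R x)]
  have hAG : hausdorffDist (F (radialRetraction ξ r R x)) (perturbation F K ξ r R x) ≤
      tent ξ r x * hausdorffDist K (F (radialRetraction ξ r R x)) := by
    rw [hausdorffDist_comm, perturbation]
    simpa [zero_smul_set hKne] using hausdorffDist_convexComb_le hKco hAco hKne hAne hAne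
      hKc.isBounded hAc.isBounded hAc.isBounded le_rfl tent_nonneg (tent_le_one hr.le)
  have hKA : tent ξ r x * hausdorffDist K (F (radialRetraction ξ r R x)) ≤ ρ := by
    rcases le_total ‖x - ξ‖ r with hnear | hfar
    · rw [radialRetraction_of_norm_le hnear]
      exact (mul_le_of_le_one_left hausdorffDist_nonneg (tent_le_one hr.le)).trans hKF
    · rw [tent_of_le_norm hr hfar, zero_mul]
      exact hausdorffDist_nonneg.trans hKF
  calc _ ≤ hausdorffDist (F x) (F (radialRetraction ξ r R x)) +
        hausdorffDist (F (radialRetraction ξ r R x)) (perturbation F K ξ r R x) :=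
        hausdorffDist_triangle (hausdorffEDist_ne_top_of_nonempty_of_bounded hFxne hAne
          hFxc.isBounded hAc.isBounded)
    _ ≤ 2 * r := by linarith

end Perturbation

theorem perturbation_lemma_general {X : Type*} [NormedAddCommGroup X] [NormedSpace ℝ X]
    (C : Set X)
    (hCco : Convex ℝ C)
    (F : X → Set X) (hF : MapsIntoCK C F)
    (L : ℝ) (hL0 : 0 ≤ L) (hL1 : L ≤ 1)
    (hFL : ∀ x ∈ C, ∀ y ∈ C, hausdorffDist (F x) (F y) ≤ L * ‖x - y‖)
    (ξ : X) (hξ : ξ ∈ C) (ρ r R : ℝ) (hρ : 0 < ρ) (hρr : ρ < r) (hrR : r < R)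
    (K : Set X) (hKne : K.Nonempty) (hKcp : IsCompact K) (hKco : Convex ℝ K) (hKC : K ⊆ C)
    (hKF : hausdorffDist K (F ξ) < ρ) :
    ∃ G : X → Set X, MapsIntoCK C G ∧
      G ξ = K ∧
      (∀ x ∈ C \ Metric.ball ξ R, G x = F x) ∧
      (∀ x ∈ C, ∀ y ∈ C,
        hausdorffDist (G x) (G y) ≤ max (R / (R - r) * L) (L + ρ / r) * ‖x - y‖) ∧
      (∀ x ∈ C, hausdorffDist (F x) (G x) ≤ 2 * r) := by
  have hr : 0 < r := hρ.trans hρr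
  refine ⟨perturbation F K ξ r R, mapsIntoCK_perturbation hCco hF hξ hKne hKcp hKco hKC hr.le hrR,
    perturbation_self (hF ξ hξ).1 hr.le, fun x hx => ?_,
    fun x hx y hy => hausdorffDist_perturbation_le hCco hF hξ hKne hKcp hKco hKF.le hL0 hFL hr hrR
      hx hy,
    fun x hx => hausdorffDist_perturbation_le_two_mul hCco hF hξ hKne hKcp hKco hKF.le hρr.le hL1
      hFL hr hrR hx⟩
  refine perturbation_of_le_norm hKne hr hrR ?_
  simpa [dist_eq_norm] using hx.2

/-- Perturbation lemma: given a nonexpansive `F : C → 𝒞𝒦(C)` with Lipschitz constant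
`L ≤ 1`, a point `ξ ∈ C`, parameters `0 < ρ < r < R` and a nonempty convex compact `K ⊆ C`
with `h(K, F(ξ)) < ρ`, there is `G : C → 𝒞𝒦(C)` with `G(ξ) = K`, `G = F` off `B(ξ, R)`,
`Lip G ≤ max{(R/(R−r))L, L + ρ/r}` and `h(F(x), G(x)) ≤ 2r` on `C`. -/
theorem perturbation_lemma {X : Type*} [NormedAddCommGroup X] [NormedSpace ℝ X]
    [CompleteSpace X] (C : Set X) (hCb : Bornology.IsBounded C) (hCcl : IsClosed C)
    (hCco : Convex ℝ C)
    (F : X → Set X) (hF : MapsIntoCK C F)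
    (L : ℝ) (hL0 : 0 ≤ L) (hL1 : L ≤ 1)
    (hFL : ∀ x ∈ C, ∀ y ∈ C, hausdorffDist (F x) (F y) ≤ L * ‖x - y‖)
    (ξ : X) (hξ : ξ ∈ C) (ρ r R : ℝ) (hρ : 0 < ρ) (hρr : ρ < r) (hrR : r < R)
    (K : Set X) (hKne : K.Nonempty) (hKcp : IsCompact K) (hKco : Convex ℝ K) (hKC : K ⊆ C)
    (hKF : hausdorffDist K (F ξ) < ρ) :
    ∃ G : X → Set X, MapsIntoCK C G ∧
      G ξ = K ∧
      (∀ x ∈ C \ Metric.ball ξ R, G x = F x) ∧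
      (∀ x ∈ C, ∀ y ∈ C,
        hausdorffDist (G x) (G y) ≤ max (R / (R - r) * L) (L + ρ / r) * ‖x - y‖) ∧
      (∀ x ∈ C, hausdorffDist (F x) (G x) ≤ 2 * r) :=
  perturbation_lemma_general C hCco F hF L hL0 hL1 hFL ξ hξ ρ r R hρ hρr hrR K hKne hKcp hKco hKC
    hKF
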